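/- Let X, Y be compact metric spaces and R an optimal correspondence between X and Y, i.e., dis R = 2·d_GH(X,Y). Then for every t ∈ [0,1], with R_0 = X, R_1 = Y, and R_t = (R, d_t) for t ∈ (0,1), the point R_t lies on the metric segment [X,Y]: d_GH(X, R_t) + d_GH(R_t, Y) = d_GH(X,Y); moreover d_GH(X,R_t) = t·d_GH(X,Y) and d_GH(R_t,Y) = (1−t)·d_GH(X,Y). -/

import Mathlib

open scoped ENNReal

/-- A correspondence between `X` and `Y`: a relation whose projections are surjective. -/
def IsCorr {X Y : Type*} (R : Set (X × Y)) : Prop :=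
  (∀ x : X, ∃ y : Y, (x, y) ∈ R) ∧ (∀ y : Y, ∃ x : X, (x, y) ∈ R)

/-- The distortion of a relation: `sup |d(x,x') - d(y,y')|` over pairs in `R`. -/
noncomputable def corrDis {X Y : Type*} [MetricSpace X] [MetricSpace Y]
    (R : Set (X × Y)) : ℝ≥0∞ :=
  ⨆ p ∈ R, ⨆ q ∈ R, edist (dist p.1 q.1) (dist p.2 q.2)

/-- The Gromov–Hausdorff distance: half the infimal distortion of correspondences. -/
noncomputable def ghDist (X Y : Type*) [MetricSpace X] [MetricSpace Y] : ℝ≥0∞ :=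
  (⨅ (R : Set (X × Y)) (_ : IsCorr R), corrDis R) / 2

/-!
Projecting `R_t` to its two factors gives correspondences `X ~ R_t` and `R_t ~ Y` of
distortion at most `t · dis R` and `(1 - t) · dis R`, because `d_t` differs from `d_X` by
`t (d_Y - d_X)` and from `d_Y` by `(1 - t) (d_X - d_Y)`. For an optimal `R` this gives
`d_GH(X, R_t) ≤ t d_GH(X, Y)` and `d_GH(R_t, Y) ≤ (1 - t) d_GH(X, Y)`. These bounds add up to
`d_GH(X, Y)`, which is finite for compact spaces, so the triangle inequality for `d_GH`
(compose correspondences) forces equality in both.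
-/

open Function SetRel

lemma ENNReal.eq_and_eq_of_add_le_add {a b c d : ℝ≥0∞} (hc : c ≠ ⊤) (hd : d ≠ ⊤)
    (hac : a ≤ c) (hbd : b ≤ d) (h : c + d ≤ a + b) : a = c ∧ b = d :=
  ⟨le_antisymm hac <| ENNReal.le_of_add_le_add_right hd <| h.trans (add_le_add_right hbd a),
    le_antisymm hbd <| ENNReal.le_of_add_le_add_left hc <| h.trans (add_le_add_left hac b)⟩

section Correspondence

variable {X Y Z : Type*}

lemma IsCorr.comp {S : Set (X × Z)} {T : Set (Z × Y)} (hS : IsCorr S) (hT : IsCorr T) :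
    IsCorr (S ○ T) := by
  refine ⟨fun x => ?_, fun y => ?_⟩
  · obtain ⟨z, hxz⟩ := hS.1 x
    obtain ⟨y, hzy⟩ := hT.1 z
    exact ⟨y, z, hxz, hzy⟩
  · obtain ⟨z, hzy⟩ := hT.2 y
    obtain ⟨x, hxz⟩ := hS.2 z
    exact ⟨x, z, hxz, hzy⟩

lemma IsCorr.surjective_fst {R : Set (X × Y)} (hR : IsCorr R) :
    Surjective (Prod.fst ∘ ((↑) : R → X × Y)) :=
  fun x => let ⟨y, hy⟩ := hR.1 x; ⟨⟨(x, y), hy⟩, rfl⟩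

lemma IsCorr.surjective_snd {R : Set (X × Y)} (hR : IsCorr R) :
    Surjective (Prod.snd ∘ ((↑) : R → X × Y)) :=
  fun y => let ⟨x, hx⟩ := hR.2 y; ⟨⟨(x, y), hx⟩, rfl⟩

lemma isCorr_graph_left {f : Z → X} (hf : Surjective f) : IsCorr {q : X × Z | f q.2 = q.1} :=
  ⟨hf, fun z => ⟨f z, rfl⟩⟩

lemma isCorr_graph_right {g : Z → Y} (hg : Surjective g) : IsCorr {q : Z × Y | g q.1 = q.2} :=
  ⟨fun z => ⟨g z, rfl⟩, hg⟩

variable [MetricSpace X] [MetricSpace Y] [MetricSpace Z]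

lemma le_corrDis {R : Set (X × Y)} {p q : X × Y} (hp : p ∈ R) (hq : q ∈ R) :
    edist (dist p.1 q.1) (dist p.2 q.2) ≤ corrDis R :=
  le_iSup₂_of_le p hp (le_iSup₂_of_le q hq le_rfl)

lemma corrDis_le {R : Set (X × Y)} {c : ℝ≥0∞}
    (h : ∀ p ∈ R, ∀ q ∈ R, edist (dist p.1 q.1) (dist p.2 q.2) ≤ c) : corrDis R ≤ c :=
  iSup₂_le fun p hp => iSup₂_le fun q hq => h p hp q hq

lemma corrDis_ne_top [BoundedSpace X] [BoundedSpace Y] (R : Set (X × Y)) : corrDis R ≠ ⊤ := by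
  refine ne_top_of_le_ne_top (ENNReal.ofReal_ne_top (r := Metric.diam (Set.univ : Set X) +
    Metric.diam (Set.univ : Set Y))) (corrDis_le fun p _ q _ => ?_)
  have hX : dist p.1 q.1 ≤ Metric.diam (Set.univ : Set X) :=
    Metric.dist_le_diam_of_mem (Bornology.isBounded_univ.2 inferInstance) trivial trivial
  have hY : dist p.2 q.2 ≤ Metric.diam (Set.univ : Set Y) :=
    Metric.dist_le_diam_of_mem (Bornology.isBounded_univ.2 inferInstance) trivial trivial
  rw [edist_dist, Real.dist_eq]
  refine ENNReal.ofReal_le_ofReal (abs_sub_le_iff.2 ⟨?_, ?_⟩) <;>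
    linarith [dist_nonneg (x := p.1) (y := q.1), dist_nonneg (x := p.2) (y := q.2)]

lemma two_mul_ghDist (X Y : Type*) [MetricSpace X] [MetricSpace Y] :
    2 * ghDist X Y = ⨅ (R : Set (X × Y)) (_ : IsCorr R), corrDis R :=
  ENNReal.mul_div_cancel two_ne_zero ENNReal.ofNat_ne_top

lemma IsCorr.two_mul_ghDist_le {R : Set (X × Y)} (hR : IsCorr R) :
    2 * ghDist X Y ≤ corrDis R :=
  (two_mul_ghDist X Y).trans_le (iInf₂_le R hR)

lemma IsCorr.ghDist_ne_top [BoundedSpace X] [BoundedSpace Y] {R : Set (X × Y)}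
    (hR : IsCorr R) : ghDist X Y ≠ ⊤ := by
  intro h
  have := ne_top_of_le_ne_top (corrDis_ne_top R) hR.two_mul_ghDist_le
  rw [h, ENNReal.mul_top two_ne_zero] at this
  exact this rfl

lemma corrDis_comp_le (S : Set (X × Z)) (T : Set (Z × Y)) :
    corrDis (S ○ T) ≤ corrDis S + corrDis T := by
  refine corrDis_le ?_
  rintro ⟨x, y⟩ ⟨z, hxz, hzy⟩ ⟨x', y'⟩ ⟨z', hxz', hzy'⟩
  calc edist (dist x x') (dist y y')
      ≤ edist (dist x x') (dist z z') + edist (dist z z') (dist y y') := edist_triangle _ _ _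
    _ ≤ corrDis S + corrDis T := add_le_add (le_corrDis hxz hxz') (le_corrDis hzy hzy')

theorem ghDist_triangle : ghDist X Y ≤ ghDist X Z + ghDist Z Y := by
  rw [← ENNReal.mul_le_mul_iff_right two_ne_zero ENNReal.ofNat_ne_top, mul_add,
    two_mul_ghDist, two_mul_ghDist, two_mul_ghDist]
  exact ENNReal.le_iInf₂_add_iInf₂ fun S hS T hT =>
    iInf₂_le_of_le _ (hS.comp hT) (corrDis_comp_le S T)

end Correspondence

section Interpolation

variable {X Y Z : Type*} [MetricSpace X] [MetricSpace Y] [MetricSpace Z] {p : Z → X × Y} {t : ℝ}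

lemma two_mul_ghDist_fst_le
    (hp : ∀ z z', dist z z' = (1 - t) * dist (p z).1 (p z').1 + t * dist (p z).2 (p z').2)
    (ht : 0 ≤ t) (hsurj : Surjective (Prod.fst ∘ p)) :
    2 * ghDist X Z ≤ ENNReal.ofReal t * corrDis (Set.range p) := by
  refine (isCorr_graph_left hsurj).two_mul_ghDist_le.trans (corrDis_le ?_)
  rintro ⟨x, z⟩ (rfl : (p z).1 = x) ⟨x', z'⟩ (rfl : (p z').1 = x')
  have hR := le_corrDis (R := Set.range p) (Set.mem_range_self z) (Set.mem_range_self z')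
  rw [edist_dist, Real.dist_eq] at hR ⊢
  rw [hp, show ∀ a b : ℝ, a - ((1 - t) * a + t * b) = t * (a - b) by intros; ring, abs_mul,
    abs_of_nonneg ht, ENNReal.ofReal_mul ht]
  gcongr

lemma two_mul_ghDist_snd_le
    (hp : ∀ z z', dist z z' = (1 - t) * dist (p z).1 (p z').1 + t * dist (p z).2 (p z').2)
    (ht : t ≤ 1) (hsurj : Surjective (Prod.snd ∘ p)) :
    2 * ghDist Z Y ≤ ENNReal.ofReal (1 - t) * corrDis (Set.range p) := by
  have ht' : 0 ≤ 1 - t := sub_nonneg.2 ht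
  refine (isCorr_graph_right hsurj).two_mul_ghDist_le.trans (corrDis_le ?_)
  rintro ⟨z, y⟩ (rfl : (p z).2 = y) ⟨z', y'⟩ (rfl : (p z').2 = y')
  have hR := le_corrDis (R := Set.range p) (Set.mem_range_self z) (Set.mem_range_self z')
  rw [edist_dist, Real.dist_eq] at hR ⊢
  rw [hp, show ∀ a b : ℝ, (1 - t) * a + t * b - b = (1 - t) * (a - b) by intros; ring, abs_mul,
    abs_of_nonneg ht', ENNReal.ofReal_mul ht']
  gcongr

end Interpolation

/-- If `R` is an optimal correspondence between compact `X` and `Y`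
(`dis R = 2 d_GH(X,Y)`), then for `t ∈ (0,1)` the space `R_t` lies on the metric
segment `[X,Y]`, with `d_GH(X,R_t) = t·d_GH(X,Y)` and `d_GH(R_t,Y) = (1-t)·d_GH(X,Y)`.
(The endpoint cases `R_0 = X`, `R_1 = Y` hold trivially.) -/
theorem stmt14 {X Y : Type*} [mX : MetricSpace X] [mY : MetricSpace Y]
    [CompactSpace X] [CompactSpace Y]
    (R : Set (X × Y)) (hR : IsCorr R) (hopt : corrDis R = 2 * ghDist X Y)
    (t : ℝ) (ht : t ∈ Set.Ioo (0 : ℝ) 1)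
    (mt : MetricSpace R)
    (hmt : ∀ a b : R, @dist R mt.toDist a b =
      (1 - t) * dist a.1.1 b.1.1 + t * dist a.1.2 b.1.2) :
    @ghDist X R mX mt = ENNReal.ofReal t * ghDist X Y ∧
    @ghDist R Y mt mY = ENNReal.ofReal (1 - t) * ghDist X Y ∧
    @ghDist X R mX mt + @ghDist R Y mt mY = ghDist X Y := by
  -- `R` also carries the subspace metric of `X × Y`; make `mt` the instance used below.
  let _ := mt
  obtain ⟨ht0, ht1⟩ := ht
  have hfin : ghDist X Y ≠ ⊤ := hR.ghDist_ne_top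
  have hXR : ghDist X R ≤ ENNReal.ofReal t * ghDist X Y := by
    have h := two_mul_ghDist_fst_le hmt ht0.le hR.surjective_fst
    rwa [Subtype.range_coe, hopt, mul_left_comm,
      ENNReal.mul_le_mul_iff_right two_ne_zero ENNReal.ofNat_ne_top] at h
  have hRY : ghDist R Y ≤ ENNReal.ofReal (1 - t) * ghDist X Y := by
    have h := two_mul_ghDist_snd_le hmt ht1.le hR.surjective_snd
    rwa [Subtype.range_coe, hopt, mul_left_comm,
      ENNReal.mul_le_mul_iff_right two_ne_zero ENNReal.ofNat_ne_top] at h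
  have hsplit : ENNReal.ofReal t * ghDist X Y + ENNReal.ofReal (1 - t) * ghDist X Y =
      ghDist X Y := by
    rw [← add_mul, ← ENNReal.ofReal_add ht0.le (sub_nonneg.2 ht1.le), add_sub_cancel,
      ENNReal.ofReal_one, one_mul]
  obtain ⟨hXR_eq, hRY_eq⟩ := ENNReal.eq_and_eq_of_add_le_add
    (ENNReal.mul_ne_top ENNReal.ofReal_ne_top hfin) (ENNReal.mul_ne_top ENNReal.ofReal_ne_top hfin)
    hXR hRY (hsplit.trans_le ghDist_triangle)
  exact ⟨hXR_eq, hRY_eq, by rw [hXR_eq, hRY_eq, hsplit]⟩
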